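/- Let i, j, n be positive integers with 0 < i < F_n ≤ j. Then S_{j,i} = 0; i.e., from any state j ≥ F_n the chain cannot jump to any state i with 0 < i < F_n. -/

import Mathlib

/-- Fibonacci sequence with `F 0 = 1`, `F 1 = 2`, `F (n+2) = F (n+1) + F n`. -/
def fibF : ℕ → ℕ
  | 0 => 1
  | 1 => 2
  | (n+2) => fibF (n+1) + fibF n

lemma fibF_pos : ∀ n, 0 < fibF n
  | 0 => by simp [fibF]
  | 1 => by simp [fibF]
  | (n+2) => by
      have h1 := fibF_pos (n+1)
      simp only [fibF]
      omega

/-- Zeckendorf digits of `N` in the base `fibF`: `N = ∑ i, zeck N i * fibF i`,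
with `zeck N i ∈ {0,1}` and no two consecutive `1`'s. -/
def zeck (N i : ℕ) : ℕ :=
  if h : N = 0 then 0
  else if i = Nat.findGreatest (fun j => fibF j ≤ N) N then 1
  else zeck (N - fibF (Nat.findGreatest (fun j => fibF j ≤ N) N)) i
termination_by N
decreasing_by
  exact Nat.sub_lt (Nat.pos_of_ne_zero h) (fibF_pos _)

lemma zeck_eq_zero_of_lt : ∀ N, ∀ i, N < i → zeck N i = 0 := by
  intro N
  induction N using Nat.strong_induction_on with
  | _ N ih =>
    intro i hi
    rw [zeck]
    split
    · rfl
    · rename_i h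
      have hkN : Nat.findGreatest (fun j => fibF j ≤ N) N ≤ N := Nat.findGreatest_le N
      rw [if_neg (by omega)]
      exact ih _ (Nat.sub_lt (Nat.pos_of_ne_zero h) (fibF_pos _)) i
        (lt_of_le_of_lt (Nat.sub_le _ _) hi)

lemma exists_break0 (N : ℕ) : ∃ i, ¬(zeck N (2*i+1) = 1 ∧ zeck N (2*i) = 0) := by
  refine ⟨N + 1, ?_⟩
  have h : zeck N (2*(N+1)+1) = 0 := zeck_eq_zero_of_lt N _ (by omega)
  simp [h]

lemma exists_break1 (N : ℕ) : ∃ i, ¬(zeck N (2*i+2) = 1 ∧ zeck N (2*i+1) = 0) := by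
  refine ⟨N + 1, ?_⟩
  have h : zeck N (2*(N+1)+2) = 0 := zeck_eq_zero_of_lt N _ (by omega)
  simp [h]

/-- The number `s` of `10`-blocks carried in the stochastic Fibonacci adding machine:
if the digits of `N` end with `00(10)^s` (case `ε₀ = 0`) or with `00(10)^s1`
(case `ε₀ = 1`), this returns `s`. -/
def carryLen (N : ℕ) : ℕ :=
  if zeck N 0 = 0 then Nat.find (exists_break0 N) else Nat.find (exists_break1 N)

/-- `Pprod p t = p 1 * p 2 * ⋯ * p t`. -/
def Pprod (p : ℕ → ℝ) (t : ℕ) : ℝ := ∏ i ∈ Finset.Icc 1 t, p i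

/-- The transition matrix `S` of the Fibonacci stochastic adding machine associated to
the probability sequence `p`:  `S N N = 1 - p 1`;  if the digits of `N` end with
`00(10)^s` then `S N (N+1) = p 1 ⋯ p (s+1)` and `S N (N+1-F (2m)) = p 1 ⋯ p m * (1 - p (m+1))`
for `1 ≤ m ≤ s`;  if the digits of `N` end with `00(10)^s1` then
`S N (N+1) = p 1 ⋯ p (s+2)` and `S N (N+1-F (2m-1)) = p 1 ⋯ p m * (1 - p (m+1))` for
`1 ≤ m ≤ s+1`;  all other entries vanish. -/
noncomputable def Smat (p : ℕ → ℝ) (N M : ℕ) : ℝ :=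
  (if M = N then 1 - p 1 else 0) +
  if zeck N 0 = 0 then
    (if M = N + 1 then Pprod p (carryLen N + 1) else 0) +
    ∑ m ∈ Finset.Icc 1 (carryLen N),
      (if M = N + 1 - fibF (2*m) then Pprod p m * (1 - p (m+1)) else 0)
  else
    (if M = N + 1 then Pprod p (carryLen N + 2) else 0) +
    ∑ m ∈ Finset.Icc 1 (carryLen N + 1),
      (if M = N + 1 - fibF (2*m - 1) then Pprod p m * (1 - p (m+1)) else 0)

/-!
If the last Zeckendorf digits of `N` are `ε_{n-1} ε_{n-2} ⋯ ε_0 = 1010⋯` (ones at the positions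
`n-1, n-3, …`), they contribute `F_{n-1} + F_{n-3} + ⋯ = F_n - 1` to `N`. Every jump of the chain
other than `N → N` and `N → N+1` goes to `N + 1 - F_n` for such an `n`, i.e. it erases this tail
and keeps the higher digits. The target is therefore `0` or at least the leading Fibonacci
number `F_t ≤ N`, hence at least every `F_n ≤ N`.
-/

lemma fibF_lt_fibF_succ (n : ℕ) : fibF n < fibF (n + 1) := by
  cases n with
  | zero => simp [fibF]
  | succ k =>
    have := fibF_pos k
    simp only [fibF]
    omega

lemma fibF_mono : Monotone fibF :=
  monotone_nat_of_le_succ fun n => (fibF_lt_fibF_succ n).le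

lemma lt_fibF (n : ℕ) : n < fibF n := by
  induction n with
  | zero => simp [fibF]
  | succ k ih => have := fibF_lt_fibF_succ k; omega

def zeckTop (N : ℕ) : ℕ := Nat.findGreatest (fun j => fibF j ≤ N) N

lemma zeckTop_mono : Monotone zeckTop :=
  fun _ _ hNM => Nat.findGreatest_mono (fun _ h => h.trans hNM) hNM

lemma le_zeckTop {N n : ℕ} (h : fibF n ≤ N) : n ≤ zeckTop N :=
  Nat.le_findGreatest ((lt_fibF n).trans_le h).le h

lemma fibF_le_fibF_zeckTop {N n : ℕ} (h : fibF n ≤ N) : fibF n ≤ fibF (zeckTop N) :=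
  fibF_mono (le_zeckTop h)

lemma fibF_zeckTop_le {N : ℕ} (h : N ≠ 0) : fibF (zeckTop N) ≤ N :=
  Nat.findGreatest_spec (P := fun j => fibF j ≤ N) (Nat.zero_le N)
    (show fibF 0 ≤ N by simp only [fibF]; omega)

lemma lt_fibF_zeckTop_succ (N : ℕ) : N < fibF (zeckTop N + 1) := by
  by_contra! h
  have := le_zeckTop h
  omega

lemma zeck_zero_left (i : ℕ) : zeck 0 i = 0 := by
  rw [zeck]; simp

lemma zeck_zeckTop {N : ℕ} (h : N ≠ 0) : zeck N (zeckTop N) = 1 := by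
  rw [zeck]; simp [h, zeckTop]

lemma zeck_of_ne_zeckTop {N i : ℕ} (h : N ≠ 0) (hi : i ≠ zeckTop N) :
    zeck N i = zeck (N - fibF (zeckTop N)) i := by
  unfold zeckTop at hi ⊢
  rw [zeck]; simp [h, hi]

lemma zeck_le_one (N i : ℕ) : zeck N i ≤ 1 := by
  induction N using Nat.strong_induction_on with
  | _ N ih =>
    by_cases hN : N = 0
    · simp [hN, zeck_zero_left]
    by_cases hi : i = zeckTop N
    · rw [hi, zeck_zeckTop hN]
    rw [zeck_of_ne_zeckTop hN hi]
    exact ih _ (Nat.sub_lt (Nat.pos_of_ne_zero hN) (fibF_pos _))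

lemma le_zeckTop_of_zeck_eq_one {N i : ℕ} (h : zeck N i = 1) : i ≤ zeckTop N := by
  induction N using Nat.strong_induction_on with
  | _ N ih =>
    by_cases hN : N = 0
    · simp [hN, zeck_zero_left] at h
    by_cases hi : i = zeckTop N
    · exact hi.le
    rw [zeck_of_ne_zeckTop hN hi] at h
    exact (ih _ (Nat.sub_lt (Nat.pos_of_ne_zero hN) (fibF_pos _)) h).trans
      (zeckTop_mono (Nat.sub_le _ _))

def AlternatingOnes (N n : ℕ) : Prop :=
  ∀ k < n, (n - k) % 2 = 1 → zeck N k = 1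

lemma AlternatingOnes.sub_zeckTop {N n : ℕ} (h : AlternatingOnes N n) (hN : N ≠ 0)
    (hn : n ≤ zeckTop N) : AlternatingOnes (N - fibF (zeckTop N)) n := fun k hk hodd => by
  rw [← zeck_of_ne_zeckTop hN (by omega)]
  exact h k hk hodd

lemma AlternatingOnes.sub_zeckTop_of_eq {N n : ℕ} (h : AlternatingOnes N (n + 2))
    (hN : N ≠ 0) (ht : zeckTop N = n + 1) : AlternatingOnes (N - fibF (zeckTop N)) n :=
  fun k hk hodd => by
    rw [← zeck_of_ne_zeckTop hN (by omega)]
    exact h k (by omega) (by omega)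

theorem AlternatingOnes.succ_eq_fibF_or_fibF_add_le {N n : ℕ} (h : AlternatingOnes N n) :
    N + 1 = fibF n ∨ fibF n + fibF (zeckTop N) ≤ N + 1 := by
  induction N using Nat.strong_induction_on generalizing n with
  | _ N ih =>
    by_cases hN : N = 0
    · subst hN
      obtain rfl : n = 0 := by
        by_contra hn
        have := h (n - 1) (by omega) (by omega)
        rw [zeck_zero_left] at this
        omega
      simp [fibF]
    set t := zeckTop N
    set N' := N - fibF t with hN'
    have hNt : fibF t ≤ N := fibF_zeckTop_le hN
    have hN't : N' < N := Nat.sub_lt (Nat.pos_of_ne_zero hN) (fibF_pos _)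
    have hNsucc : N < fibF (t + 1) := lt_fibF_zeckTop_succ N
    by_cases hnt : n ≤ t
    · have hIH := ih N' hN't (h.sub_zeckTop hN hnt)
      omega
    rcases n with _ | _ | n
    · omega
    · have ht : t = 0 := by omega
      rw [ht] at hNsucc
      simp only [fibF] at hNsucc ⊢
      omega
    -- The digit `ε_{n+1} = 1` forces the leading digit to be `ε_{n+1}` itself.
    have ht : t = n + 1 := by
      have := le_zeckTop_of_zeck_eq_one (h (n + 1) (by omega) (by omega))
      omega
    have hfib : fibF (n + 1 + 1) = fibF t + fibF n := by rw [ht]; rfl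
    have hN'lt : N' < fibF n := by rw [ht] at hNsucc; omega
    -- `N' < F_n` excludes the second alternative for `N'`, so `N' + 1 = F_n`.
    have hIH := ih N' hN't (h.sub_zeckTop_of_eq hN ht)
    have := fibF_pos (zeckTop N')
    omega

lemma alternatingOnes_of_le_carryLen {N m : ℕ} (h0 : zeck N 0 = 0) (hm : m ≤ carryLen N) :
    AlternatingOnes N (2 * m) := fun k hk hodd => by
  obtain ⟨k, rfl⟩ : ∃ k', k = 2 * k' + 1 := ⟨k / 2, by omega⟩
  have hmin := Nat.find_min (exists_break0 N) (m := k)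
    (by rw [carryLen, if_pos h0] at hm; omega)
  exact (not_not.mp hmin).1

lemma alternatingOnes_of_le_carryLen_succ {N m : ℕ} (h0 : zeck N 0 ≠ 0)
    (hm : m ≤ carryLen N + 1) : AlternatingOnes N (2 * m - 1) := fun k hk hodd => by
  obtain rfl | ⟨k, rfl⟩ : k = 0 ∨ ∃ k', k = 2 * k' + 2 :=
    (Nat.eq_zero_or_pos k).imp_right fun _ => ⟨k / 2 - 1, by omega⟩
  · have := zeck_le_one N 0
    omega
  have hmin := Nat.find_min (exists_break1 N) (m := k)
    (by rw [carryLen, if_neg h0] at hm; omega)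
  exact (not_not.mp hmin).1

lemma Smat_eq_zero_of_forall_ne {p : ℕ → ℝ} {N M : ℕ} (hM : M ≠ N) (hM' : M ≠ N + 1)
    (hjump : ∀ n, AlternatingOnes N n → M ≠ N + 1 - fibF n) : Smat p N M = 0 := by
  rw [Smat, if_neg hM]
  split_ifs with h0
  · rw [Finset.sum_eq_zero fun m hm => if_neg <|
      hjump _ (alternatingOnes_of_le_carryLen h0 (Finset.mem_Icc.mp hm).2)]
    simp
  · rw [Finset.sum_eq_zero fun m hm => if_neg <|
      hjump _ (alternatingOnes_of_le_carryLen_succ h0 (Finset.mem_Icc.mp hm).2)]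
    simp

theorem stmt2_general (p : ℕ → ℝ)
    (i j n : ℕ) (hipos : 0 < i)
    (h1 : i < fibF n) (h2 : fibF n ≤ j) :
    Smat p j i = 0 := by
  refine Smat_eq_zero_of_forall_ne (by omega) (by omega) fun m hm hi => ?_
  have hjump := hm.succ_eq_fibF_or_fibF_add_le
  have hFj := fibF_le_fibF_zeckTop h2
  omega

/-- Let `i, j, n` be positive integers with `0 < i < F n ≤ j`.
Then `S j i = 0`: from any state `j ≥ F n` the chain cannot jump to any state `i` with
`0 < i < F n`. -/
theorem stmt2 (p : ℕ → ℝ) (hp : ∀ i, 1 ≤ i → 0 < p i ∧ p i ≤ 1)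
    (i j n : ℕ) (hipos : 0 < i) (hnpos : 0 < n)
    (h1 : i < fibF n) (h2 : fibF n ≤ j) :
    Smat p j i = 0 :=
  stmt2_general p i j n hipos h1 h2
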